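/- Set f0 := z, f1 := x−tw, f2 := z−y³. For each i ∈ {0,1,2}, if αi = 0 then fi is an invariant divisor of the G2^(1) system: the total derivative of fi along the Hamiltonian vector field, namely ∂fi/∂t + (∂H/∂y)(∂fi/∂x) − (∂H/∂x)(∂fi/∂y) + (∂H/∂w)(∂fi/∂z) − (∂H/∂z)(∂fi/∂w), is divisible by fi in the polynomial ring ℂ(t)[x,y,z,w]. -/
import Mathlib

open Complex

noncomputable def HG2 (a0 a1 a2 : ℂ) (t x y z w : ℂ) : ℂ :=
  -(3*(5*a0 + 18*a1 + 27*a2)*t*x*y^3) - x*y/(2*t)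
    + 6*a1*(a0 + 6*a1 + 9*a2)*t*y^2
    - 12*t^2*z^2*w^2 - (24*(a1+a2)*t^2 - 3/(2*t))*z*w
    + 12*t^2*y^3*z*w^2 - 24*t*x*y^3*z*w + 12*x^2*y^3*z + 24*t*x*z^2*w
    - 12*x^2*z^2 - 12*a0*t^2*y^3*w
    + 12*(2*a0 + 4*a1 + 9*a2)*x*y^2*z + 3*(19*a0 + 38*a1 + 45*a2)*t*y^2*z*w
    - 6*a1*(a0 + 4*a1 + 9*a2)*y*z - 4*(a0 - 4*a1 - 3*a2)*t*x*z

noncomputable def pdX (H : ℂ → ℂ → ℂ → ℂ → ℂ → ℂ) (t x y z w : ℂ) : ℂ :=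
  deriv (fun s => H t s y z w) x

noncomputable def pdY (H : ℂ → ℂ → ℂ → ℂ → ℂ → ℂ) (t x y z w : ℂ) : ℂ :=
  deriv (fun s => H t x s z w) y

noncomputable def pdZ (H : ℂ → ℂ → ℂ → ℂ → ℂ → ℂ) (t x y z w : ℂ) : ℂ :=
  deriv (fun s => H t x y s w) z

noncomputable def pdW (H : ℂ → ℂ → ℂ → ℂ → ℂ → ℂ) (t x y z w : ℂ) : ℂ :=
  deriv (fun s => H t x y z s) w

noncomputable def pdT (f : ℂ → ℂ → ℂ → ℂ → ℂ → ℂ) (t x y z w : ℂ) : ℂ :=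
  deriv (fun s => f s x y z w) t

/-- Total derivative of `f` along the Hamiltonian vector field of `H`. -/
noncomputable def totalDeriv (H f : ℂ → ℂ → ℂ → ℂ → ℂ → ℂ) (t x y z w : ℂ) : ℂ :=
  pdT f t x y z w
  + pdY H t x y z w * pdX f t x y z w
  - pdX H t x y z w * pdY f t x y z w
  + pdW H t x y z w * pdZ f t x y z w
  - pdZ H t x y z w * pdW f t x y z w

lemma dcubic (A B Cc D p : ℂ) :
    deriv (fun s => A + B*s + Cc*s^2 + D*s^3) p = B + 2*Cc*p + 3*D*p^2 := by
  have h1 : HasDerivAt (fun s : ℂ => s) 1 p := hasDerivAt_id p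
  have h2 : HasDerivAt (fun s : ℂ => s^2) (2*p) p := by simpa using hasDerivAt_pow 2 p
  have h3 : HasDerivAt (fun s : ℂ => s^3) (3*p^2) p := by simpa using hasDerivAt_pow 3 p
  have h : HasDerivAt (fun s : ℂ => A + B*s + Cc*s^2 + D*s^3)
      (((0 + B*1) + Cc*(2*p)) + D*(3*p^2)) p :=
    (((hasDerivAt_const p A).add (h1.const_mul B)).add (h2.const_mul Cc)).add
      (h3.const_mul D)
  rw [h.deriv]; ring

theorem invariant_divisors_G2 (a0 a1 a2 : ℂ)
    (hrel : a0 + 2*a1 + 3*a2 = 0) :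
    -- f0 = z
    (a0 = 0 → ∃ g : ℂ → ℂ → ℂ → ℂ → ℂ → ℂ, ∀ t x y z w : ℂ, t ≠ 0 →
      totalDeriv (HG2 a0 a1 a2) (fun _ _ _ z _ => z) t x y z w
        = z * g t x y z w) ∧
    -- f1 = x - tw
    (a1 = 0 → ∃ g : ℂ → ℂ → ℂ → ℂ → ℂ → ℂ, ∀ t x y z w : ℂ, t ≠ 0 →
      totalDeriv (HG2 a0 a1 a2) (fun t x _ _ w => x - t*w) t x y z w
        = (x - t*w) * g t x y z w) ∧
    -- f2 = z - y³
    (a2 = 0 → ∃ g : ℂ → ℂ → ℂ → ℂ → ℂ → ℂ, ∀ t x y z w : ℂ, t ≠ 0 →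
      totalDeriv (HG2 a0 a1 a2) (fun _ _ y z _ => z - y^3) t x y z w
        = (z - y^3) * g t x y z w) := by
  refine ⟨?_, ?_, ?_⟩
  · intro ha0
    refine ⟨fun t x y z w => (3/(2*t) + 24*t*x*z - 24*t*x*y^3 - 24*t^2*z*w + 24*t^2*y^3*w + 135*a2*t*y^2 - 24*a2*t^2 + 114*a1*t*y^2 - 24*a1*t^2), ?_⟩
    intro t x y z w ht
    unfold totalDeriv
    have e1 : pdT (fun _ _ _ z _ => (z:ℂ)) t x y z w = 0 := by simp [pdT]
    have e2 : pdX (fun _ _ _ z _ => (z:ℂ)) t x y z w = 0 := by simp [pdX]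
    have e3 : pdY (fun _ _ _ z _ => (z:ℂ)) t x y z w = 0 := by simp [pdY]
    have e4 : pdZ (fun _ _ _ z _ => (z:ℂ)) t x y z w = 1 := by simp [pdZ]
    have e5 : pdW (fun _ _ _ z _ => (z:ℂ)) t x y z w = 0 := by simp [pdW]
    have hHw : pdW (HG2 a0 a1 a2) t x y z w
        = (3*z/(2*t) + 24*t*x*z^2 - 24*t*x*y^3*z + 135*a2*t*y^2*z - 24*a2*t^2*z + 114*a1*t*y^2*z - 24*a1*t^2*z + 57*a0*t*y^2*z - 12*a0*t^2*y^3) + 2*(-12*t^2*z^2 + 12*t^2*y^3*z)*w + 3*(0:ℂ)*w^2 := by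
      unfold pdW
      rw [show (fun s => HG2 a0 a1 a2 t x y z s)
          = (fun s => (-x*y/(2*t) - 12*x^2*z^2 + 12*x^2*y^3*z + 108*a2*x*y^2*z + 12*a2*t*x*z - 81*a2*t*x*y^3 + 48*a1*x*y^2*z + 16*a1*t*x*z - 54*a1*t*x*y^3 - 54*a1*a2*y*z + 54*a1*a2*t*y^2 - 24*a1^2*y*z + 36*a1^2*t*y^2 + 24*a0*x*y^2*z - 4*a0*t*x*z - 15*a0*t*x*y^3 - 6*a0*a1*y*z + 6*a0*a1*t*y^2) + (3*z/(2*t) + 24*t*x*z^2 - 24*t*x*y^3*z + 135*a2*t*y^2*z - 24*a2*t^2*z + 114*a1*t*y^2*z - 24*a1*t^2*z + 57*a0*t*y^2*z - 12*a0*t^2*y^3)*s + (-12*t^2*z^2 + 12*t^2*y^3*z)*s^2 + (0:ℂ)*s^3)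
        from funext fun s => by simp only [HG2]; ring, dcubic]
    rw [e1, e2, e3, e4, e5, hHw]
    subst ha0
    field_simp
    ring
  · intro ha1
    refine ⟨fun t x y z w => (-1/(2*t) + 36*x*y^2*z - 36*t*y^2*z*w - 24*t*x*z + 12*t*x*y^3 + 24*t^2*z*w - 12*t^2*y^3*w + 72*a2*y*z - 72*a2*t*y^2 + 24*a2*t^2), ?_⟩
    intro t x y z w ht
    unfold totalDeriv
    have e1 : pdT (fun t x _ _ w => (x - t*w : ℂ)) t x y z w = -w := by
      unfold pdT
      rw [show (fun s => (x - s*w : ℂ)) = (fun s => x + (-w)*s + 0*s^2 + 0*s^3)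
        from funext fun s => by ring, dcubic]
      ring
    have e2 : pdX (fun t x _ _ w => (x - t*w : ℂ)) t x y z w = 1 := by
      unfold pdX
      rw [show (fun s => (s - t*w : ℂ)) = (fun s => (-(t*w)) + 1*s + 0*s^2 + 0*s^3)
        from funext fun s => by ring, dcubic]
      ring
    have e3 : pdY (fun t x _ _ w => (x - t*w : ℂ)) t x y z w = 0 := by simp [pdY]
    have e4 : pdZ (fun t x _ _ w => (x - t*w : ℂ)) t x y z w = 0 := by simp [pdZ]
    have e5 : pdW (fun t x _ _ w => (x - t*w : ℂ)) t x y z w = -t := by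
      unfold pdW
      rw [show (fun s => (x - t*s : ℂ)) = (fun s => x + (-t)*s + 0*s^2 + 0*s^3)
        from funext fun s => by ring, dcubic]
      ring
    have hHy : pdY (HG2 a0 a1 a2) t x y z w
        = (-x/(2*t) - 54*a1*a2*z - 24*a1^2*z - 6*a0*a1*z) + 2*(108*a2*x*z + 135*a2*t*z*w + 48*a1*x*z + 114*a1*t*z*w + 54*a1*a2*t + 36*a1^2*t + 24*a0*x*z + 57*a0*t*z*w + 6*a0*a1*t)*y + 3*(12*x^2*z - 24*t*x*z*w + 12*t^2*z*w^2 - 81*a2*t*x - 54*a1*t*x - 15*a0*t*x - 12*a0*t^2*w)*y^2 := by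
      unfold pdY
      rw [show (fun s => HG2 a0 a1 a2 t x s z w)
          = (fun s => (3*z*w/(2*t) - 12*x^2*z^2 + 24*t*x*z^2*w - 12*t^2*z^2*w^2 + 12*a2*t*x*z - 24*a2*t^2*z*w + 16*a1*t*x*z - 24*a1*t^2*z*w - 4*a0*t*x*z) + (-x/(2*t) - 54*a1*a2*z - 24*a1^2*z - 6*a0*a1*z)*s + (108*a2*x*z + 135*a2*t*z*w + 48*a1*x*z + 114*a1*t*z*w + 54*a1*a2*t + 36*a1^2*t + 24*a0*x*z + 57*a0*t*z*w + 6*a0*a1*t)*s^2 + (12*x^2*z - 24*t*x*z*w + 12*t^2*z*w^2 - 81*a2*t*x - 54*a1*t*x - 15*a0*t*x - 12*a0*t^2*w)*s^3)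
        from funext fun s => by simp only [HG2]; ring, dcubic]
    have hHz : pdZ (HG2 a0 a1 a2) t x y z w
        = (3*w/(2*t) + 12*x^2*y^3 - 24*t*x*y^3*w + 12*t^2*y^3*w^2 + 108*a2*x*y^2 + 135*a2*t*y^2*w + 12*a2*t*x - 24*a2*t^2*w + 48*a1*x*y^2 + 114*a1*t*y^2*w + 16*a1*t*x - 24*a1*t^2*w - 54*a1*a2*y - 24*a1^2*y + 24*a0*x*y^2 + 57*a0*t*y^2*w - 4*a0*t*x - 6*a0*a1*y) + 2*(-12*x^2 + 24*t*x*w - 12*t^2*w^2)*z + 3*(0:ℂ)*z^2 := by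
      unfold pdZ
      rw [show (fun s => HG2 a0 a1 a2 t x y s w)
          = (fun s => (-x*y/(2*t) - 81*a2*t*x*y^3 - 54*a1*t*x*y^3 + 54*a1*a2*t*y^2 + 36*a1^2*t*y^2 - 15*a0*t*x*y^3 - 12*a0*t^2*y^3*w + 6*a0*a1*t*y^2) + (3*w/(2*t) + 12*x^2*y^3 - 24*t*x*y^3*w + 12*t^2*y^3*w^2 + 108*a2*x*y^2 + 135*a2*t*y^2*w + 12*a2*t*x - 24*a2*t^2*w + 48*a1*x*y^2 + 114*a1*t*y^2*w + 16*a1*t*x - 24*a1*t^2*w - 54*a1*a2*y - 24*a1^2*y + 24*a0*x*y^2 + 57*a0*t*y^2*w - 4*a0*t*x - 6*a0*a1*y)*s + (-12*x^2 + 24*t*x*w - 12*t^2*w^2)*s^2 + (0:ℂ)*s^3)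
        from funext fun s => by simp only [HG2]; ring, dcubic]
    rw [e1, e2, e3, e4, e5, hHy, hHz]
    have h0 : a0 = -(3*a2) := by linear_combination hrel - 2*ha1
    subst ha1
    subst h0
    field_simp
    ring
  · intro ha2
    refine ⟨fun t x y z w => (3/(2*t) - 72*x*y^2*z + 72*t*y^2*z*w + 24*t*x*z - 24*t^2*z*w + 72*a1*t*y^2 - 24*a1*t^2), ?_⟩
    intro t x y z w ht
    unfold totalDeriv
    have e1 : pdT (fun _ _ y z _ => (z - y^3 : ℂ)) t x y z w = 0 := by simp [pdT]
    have e2 : pdX (fun _ _ y z _ => (z - y^3 : ℂ)) t x y z w = 0 := by simp [pdX]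
    have e3 : pdY (fun _ _ y z _ => (z - y^3 : ℂ)) t x y z w = -(3*y^2) := by
      unfold pdY
      rw [show (fun s => (z - s^3 : ℂ)) = (fun s => z + 0*s + 0*s^2 + (-1)*s^3)
        from funext fun s => by ring, dcubic]
      ring
    have e4 : pdZ (fun _ _ y z _ => (z - y^3 : ℂ)) t x y z w = 1 := by simp [pdZ]
    have e5 : pdW (fun _ _ y z _ => (z - y^3 : ℂ)) t x y z w = 0 := by simp [pdW]
    have hHx : pdX (HG2 a0 a1 a2) t x y z w
        = (-y/(2*t) + 24*t*z^2*w - 24*t*y^3*z*w + 108*a2*y^2*z + 12*a2*t*z - 81*a2*t*y^3 + 48*a1*y^2*z + 16*a1*t*z - 54*a1*t*y^3 + 24*a0*y^2*z - 4*a0*t*z - 15*a0*t*y^3) + 2*(-12*z^2 + 12*y^3*z)*x + 3*(0:ℂ)*x^2 := by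
      unfold pdX
      rw [show (fun s => HG2 a0 a1 a2 t s y z w)
          = (fun s => (3*z*w/(2*t) - 12*t^2*z^2*w^2 + 12*t^2*y^3*z*w^2 + 135*a2*t*y^2*z*w - 24*a2*t^2*z*w + 114*a1*t*y^2*z*w - 24*a1*t^2*z*w - 54*a1*a2*y*z + 54*a1*a2*t*y^2 - 24*a1^2*y*z + 36*a1^2*t*y^2 + 57*a0*t*y^2*z*w - 12*a0*t^2*y^3*w - 6*a0*a1*y*z + 6*a0*a1*t*y^2) + (-y/(2*t) + 24*t*z^2*w - 24*t*y^3*z*w + 108*a2*y^2*z + 12*a2*t*z - 81*a2*t*y^3 + 48*a1*y^2*z + 16*a1*t*z - 54*a1*t*y^3 + 24*a0*y^2*z - 4*a0*t*z - 15*a0*t*y^3)*s + (-12*z^2 + 12*y^3*z)*s^2 + (0:ℂ)*s^3)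
        from funext fun s => by simp only [HG2]; ring, dcubic]
    have hHw2 : pdW (HG2 a0 a1 a2) t x y z w
        = (3*z/(2*t) + 24*t*x*z^2 - 24*t*x*y^3*z + 135*a2*t*y^2*z - 24*a2*t^2*z + 114*a1*t*y^2*z - 24*a1*t^2*z + 57*a0*t*y^2*z - 12*a0*t^2*y^3) + 2*(-12*t^2*z^2 + 12*t^2*y^3*z)*w + 3*(0:ℂ)*w^2 := by
      unfold pdW
      rw [show (fun s => HG2 a0 a1 a2 t x y z s)
          = (fun s => (-x*y/(2*t) - 12*x^2*z^2 + 12*x^2*y^3*z + 108*a2*x*y^2*z + 12*a2*t*x*z - 81*a2*t*x*y^3 + 48*a1*x*y^2*z + 16*a1*t*x*z - 54*a1*t*x*y^3 - 54*a1*a2*y*z + 54*a1*a2*t*y^2 - 24*a1^2*y*z + 36*a1^2*t*y^2 + 24*a0*x*y^2*z - 4*a0*t*x*z - 15*a0*t*x*y^3 - 6*a0*a1*y*z + 6*a0*a1*t*y^2) + (3*z/(2*t) + 24*t*x*z^2 - 24*t*x*y^3*z + 135*a2*t*y^2*z - 24*a2*t^2*z + 114*a1*t*y^2*z - 24*a1*t^2*z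 + 57*a0*t*y^2*z - 12*a0*t^2*y^3)*s + (-12*t^2*z^2 + 12*t^2*y^3*z)*s^2 + (0:ℂ)*s^3)
        from funext fun s => by simp only [HG2]; ring, dcubic]
    rw [e1, e2, e3, e4, e5, hHx, hHw2]
    have h0 : a0 = -(2*a1) := by linear_combination hrel - 3*ha2
    subst ha2
    subst h0
    field_simp
    ring
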